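/- In the special case a_{k,l} = a ∈ (0,1) for all k, l, the limiting joint distribution P{N_+(ν) = k, N_-(ν) = l} → g(1−g)^k · a(1−a)^l is the product of two geometric distributions; in particular N_+(ν) and N_-(ν) are asymptotically independent. -/

import Mathlib

open MeasureTheory ProbabilityTheory Filter Set

/-- Numbers `(N₊(n), N₋(n))` of strengthening resp. weakening (harmful nonfatal) shocks
among the first `n` shocks `X 0, …, X (n-1)`. -/
noncomputable def shockCounts (γ β α : ℝ) (b c : ℕ → ℝ) (X : ℕ → ℝ) : ℕ → ℕ × ℕ
  | 0 => (0, 0)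
  | n + 1 =>
      let p := shockCounts γ β α b c X n
      (if γ ≤ X n ∧ X n < β ∧ p.2 = 0 then p.1 + 1 else p.1,
       if β ≤ X n ∧ X n < α + b p.1 - c p.2 then p.2 + 1 else p.2)

/-- The `(i+1)`-th shock `X i` is fatal: it exceeds the current critical boundary. -/
def fatalShock (γ β α : ℝ) (b c : ℕ → ℝ) (X : ℕ → ℝ) (i : ℕ) : Prop :=
  α + b (shockCounts γ β α b c X i).1 - c (shockCounts γ β α b c X i).2 ≤ X i

/-- 0-based index of the first fatal shock (junk value if there is none);
the paper's `ν` equals this plus one. -/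
noncomputable def nuShock (γ β α : ℝ) (b c : ℕ → ℝ) (X : ℕ → ℝ) : ℕ :=
  sInf {i | fatalShock γ β α b c X i}

/-- Survival function `F̄(x) = P(X > x)` of a law `μ` on `ℝ`, as a real number. -/
noncomputable def survival (μ : Measure ℝ) (x : ℝ) : ℝ := (μ (Set.Ioi x)).toReal

/-!
Conditioning on the first shock gives a renewal equation. A shock below `γ` changes nothing, a
strengthening shock replaces `b` by `b (· + 1)`, a weakening shock replaces `c` by `c (· + 1)` and
`γ` by `β` (the strengthening band `[β, β)` is then empty), and a shock above
`θ = α + b 0 - c 0` is fatal. Solving for the probability `p k l` of failing with counts `(k, l)`: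
`p k l = ((F̄ γ - F̄ β) p₊ + (F̄ β - F̄ θ) p₋ + F̄ θ [k = l = 0]) / F̄ γ`,
where `p₊`, `p₋` are the probabilities for the shifted parameters with `k - 1`, resp. `l - 1`.
The shifted parameters satisfy the same asymptotic hypotheses (with `g = 1` after a weakening
shock), so the limit `g (1 - g) ^ k * (a (1 - a) ^ l)` follows by induction on `(k, l)`.
The renewal equation itself is computed on the canonical space `ℕ → ℝ` with the product law,
where the first coordinate is independent of the shifted sequence, which has the same law.
-/

open Function
open scoped Topology

def FailsWithCounts (γ β α : ℝ) (b c : ℕ → ℝ) (k l : ℕ) (x : ℕ → ℝ) : Prop :=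
  (∃ i, fatalShock γ β α b c x i) ∧ shockCounts γ β α b c x (nuShock γ β α b c x) = (k, l)

section Dynamics

variable {γ β α : ℝ} {b c : ℕ → ℝ} {x : ℕ → ℝ} {k l : ℕ}

theorem failsWithCounts_iff_exists_first :
    FailsWithCounts γ β α b c k l x ↔ ∃ i, fatalShock γ β α b c x i ∧
      (∀ j < i, ¬ fatalShock γ β α b c x j) ∧ shockCounts γ β α b c x i = (k, l) := by
  classical
  constructor
  · rintro ⟨hfat, hcounts⟩
    have hfat' : {i | fatalShock γ β α b c x i}.Nonempty := hfat
    rw [nuShock, Nat.sInf_def hfat'] at hcounts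
    exact ⟨_, Nat.find_spec hfat', fun j => Nat.find_min hfat', hcounts⟩
  · rintro ⟨i, hi, hmin, hcounts⟩
    have hnu : nuShock γ β α b c x = i := by
      rw [nuShock, Nat.sInf_def (s := {i | fatalShock γ β α b c x i}) ⟨i, hi⟩, Nat.find_eq_iff]
      exact ⟨hi, hmin⟩
    exact ⟨⟨i, hi⟩, hnu ▸ hcounts⟩

/-- `hγ'` and `hbc'` say that the parameters `(γ', b', c')` emulate the process restarted from
the counts `(dk, dl)`. -/
theorem shockCounts_succ_eq_add {γ' : ℝ} {b' c' : ℕ → ℝ} {dk dl : ℕ}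
    (h₁ : shockCounts γ β α b c x 1 = (dk, dl))
    (hγ' : ∀ v p, (γ ≤ v ∧ v < β ∧ dl + p = 0) ↔ (γ' ≤ v ∧ v < β ∧ p = 0))
    (hbc' : ∀ p q, α + b (dk + p) - c (dl + q) = α + b' p - c' q) (n : ℕ) :
    shockCounts γ β α b c x (n + 1) =
      (dk, dl) + shockCounts γ' β α b' c' (fun j => x (j + 1)) n := by
  induction n with
  | zero => simpa [shockCounts] using h₁
  | succ n ih =>
    rw [shockCounts, ih, shockCounts]
    set p := shockCounts γ' β α b' c' (fun j => x (j + 1)) n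
    simp only [Prod.fst_add, Prod.snd_add, hbc', if_congr (hγ' _ _) rfl rfl]
    ext <;> split_ifs <;> simp [Nat.add_assoc]

theorem failsWithCounts_iff_of_shift {γ' : ℝ} {b' c' : ℕ → ℝ} {dk dl : ℕ}
    (h₁ : shockCounts γ β α b c x 1 = (dk, dl))
    (hγ' : ∀ v p, (γ ≤ v ∧ v < β ∧ dl + p = 0) ↔ (γ' ≤ v ∧ v < β ∧ p = 0))
    (hbc' : ∀ p q, α + b (dk + p) - c (dl + q) = α + b' p - c' q)
    (h₀ : ¬ fatalShock γ β α b c x 0) :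
    FailsWithCounts γ β α b c k l x ↔
      dk ≤ k ∧ dl ≤ l ∧ FailsWithCounts γ' β α b' c' (k - dk) (l - dl) (fun j => x (j + 1)) := by
  have hcounts := shockCounts_succ_eq_add h₁ hγ' hbc'
  have hfatal : ∀ n, fatalShock γ β α b c x (n + 1) ↔
      fatalShock γ' β α b' c' (fun j => x (j + 1)) n := by
    intro n
    simp only [fatalShock, hcounts, Prod.fst_add, Prod.snd_add, hbc']
  simp only [failsWithCounts_iff_exists_first]
  constructor
  · rintro ⟨_ | n, hn, hmin, hkl⟩
    · exact absurd hn h₀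
    rw [hcounts, Prod.ext_iff, Prod.fst_add, Prod.snd_add] at hkl
    exact ⟨by omega, by omega, n, (hfatal n).1 hn,
      fun j hj => (hfatal j).not.1 (hmin (j + 1) (by omega)), by ext <;> simp <;> omega⟩
  · rintro ⟨hk, hl, n, hn, hmin, hkl⟩
    refine ⟨n + 1, (hfatal n).2 hn, ?_, ?_⟩
    · rintro (_ | j) hj
      · exact h₀
      · exact (hfatal j).not.2 (hmin j (by omega))
    · rw [hcounts, hkl]
      ext <;> simp <;> omega

theorem failsWithCounts_iff_of_null_shock (hγβ : γ ≤ β) (hβ : β ≤ α + b 0 - c 0) (hx : x 0 < γ) :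
    FailsWithCounts γ β α b c k l x ↔ FailsWithCounts γ β α b c k l (fun j => x (j + 1)) := by
  rw [failsWithCounts_iff_of_shift (dk := 0) (dl := 0) (γ' := γ) (b' := b) (c' := c)]
  · simp
  · simp [shockCounts, hx.not_ge, (hx.trans_le hγβ).not_ge]
  · simp
  · simp
  · exact fun h => (hx.trans_le (hγβ.trans hβ)).not_ge h

theorem failsWithCounts_iff_of_strengthening_shock (hβ : β ≤ α + b 0 - c 0) (hx : x 0 ∈ Ico γ β) :
    FailsWithCounts γ β α b c k l x ↔
      1 ≤ k ∧ FailsWithCounts γ β α (fun j => b (j + 1)) c (k - 1) l (fun j => x (j + 1)) := by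
  rw [failsWithCounts_iff_of_shift (dk := 1) (dl := 0) (γ' := γ) (b' := fun j => b (j + 1))
    (c' := c)]
  · simp
  · simp [shockCounts, hx.1, hx.2, hx.2.not_ge]
  · simp
  · simp [add_comm]
  · exact fun h => (hx.2.trans_le hβ).not_ge h

theorem failsWithCounts_iff_of_weakening_shock (hx : x 0 ∈ Ico β (α + b 0 - c 0)) :
    FailsWithCounts γ β α b c k l x ↔
      1 ≤ l ∧ FailsWithCounts β β α b (fun j => c (j + 1)) k (l - 1) (fun j => x (j + 1)) := by
  rw [failsWithCounts_iff_of_shift (dk := 0) (dl := 1) (γ' := β) (b' := b)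
    (c' := fun j => c (j + 1))]
  · simp
  · simp [shockCounts, hx.1, hx.2, hx.1.not_gt]
  · exact fun v p => ⟨fun h => by omega, fun h => absurd h.1 h.2.1.not_ge⟩
  · simp [add_comm]
  · exact fun h => hx.2.not_ge h

theorem failsWithCounts_iff_of_fatal_shock (hx : α + b 0 - c 0 ≤ x 0) :
    FailsWithCounts γ β α b c k l x ↔ k = 0 ∧ l = 0 := by
  have hnu : nuShock γ β α b c x = 0 := Nat.sInf_eq_zero.2 (Or.inl hx)
  simp only [FailsWithCounts, hnu, shockCounts, Prod.mk.injEq, eq_comm (a := 0)]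
  exact and_iff_right ⟨0, hx⟩

theorem failsWithCounts_iff_first_step (hγβ : γ ≤ β) (hβ : β ≤ α + b 0 - c 0) :
    FailsWithCounts γ β α b c k l x ↔
      x 0 < γ ∧ FailsWithCounts γ β α b c k l (fun j => x (j + 1)) ∨
      x 0 ∈ Ico γ β ∧ 1 ≤ k ∧
        FailsWithCounts γ β α (fun j => b (j + 1)) c (k - 1) l (fun j => x (j + 1)) ∨
      x 0 ∈ Ico β (α + b 0 - c 0) ∧ 1 ≤ l ∧
        FailsWithCounts β β α b (fun j => c (j + 1)) k (l - 1) (fun j => x (j + 1)) ∨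
      α + b 0 - c 0 ≤ x 0 ∧ k = 0 ∧ l = 0 := by
  rcases lt_or_ge (x 0) γ with h₁ | h₁
  · simp [failsWithCounts_iff_of_null_shock hγβ hβ h₁, h₁, h₁.not_ge, (h₁.trans_le hγβ).not_ge,
      (h₁.trans_le (hγβ.trans hβ)).not_ge]
  rcases lt_or_ge (x 0) β with h₂ | h₂
  · simp [failsWithCounts_iff_of_strengthening_shock hβ ⟨h₁, h₂⟩, h₁, h₂, h₁.not_gt, h₂.not_ge,
      (h₂.trans_le hβ).not_ge]
  rcases lt_or_ge (x 0) (α + b 0 - c 0) with h₃ | h₃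
  · simp [failsWithCounts_iff_of_weakening_shock ⟨h₂, h₃⟩, h₂, h₃, h₂.not_gt, h₃.not_ge,
      (hγβ.trans h₂).not_gt]
  · simp [failsWithCounts_iff_of_fatal_shock h₃, h₃, h₃.not_gt, h₂.not_gt, (hγβ.trans h₂).not_gt]

theorem measurable_shockCounts (n : ℕ) : Measurable (fun x => shockCounts γ β α b c x n) := by
  induction n with
  | zero => exact measurable_const
  | succ n ih =>
    have hstep : Measurable fun q : (ℕ × ℕ) × ℝ =>
        ((if γ ≤ q.2 ∧ q.2 < β ∧ q.1.2 = 0 then q.1.1 + 1 else q.1.1),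
          (if β ≤ q.2 ∧ q.2 < α + b q.1.1 - c q.1.2 then q.1.2 + 1 else q.1.2)) :=
      measurable_from_prod_countable_right fun p => by
        refine .prodMk (.ite ?_ ?_ ?_) (.ite ?_ ?_ ?_) <;> measurability
    exact hstep.comp (ih.prodMk (measurable_pi_apply n))

theorem measurableSet_fatalShock (i : ℕ) : MeasurableSet {x | fatalShock γ β α b c x i} :=
  measurableSet_le
    ((measurable_of_countable fun p : ℕ × ℕ => α + b p.1 - c p.2).comp (measurable_shockCounts i))
    (measurable_pi_apply i)

theorem measurableSet_failsWithCounts : MeasurableSet {x | FailsWithCounts γ β α b c k l x} := by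
  simp only [failsWithCounts_iff_exists_first, Set.ofPred_exists, Set.ofPred_and, Set.ofPred_forall]
  exact .iUnion fun i => (measurableSet_fatalShock i).inter
    ((MeasurableSet.iInter fun j => .iInter fun _ => (measurableSet_fatalShock j).compl).inter
      (measurable_shockCounts i (measurableSet_singleton _)))

end Dynamics

section SequenceSpace

variable {E : Type*} [MeasurableSpace E] {μ : Measure E} [IsProbabilityMeasure μ]

theorem infinitePi_preimage_eval_zero_inter_preimage_shift {A : Set E} {B : Set (ℕ → E)}
    (hA : MeasurableSet A) (hB : MeasurableSet B) :
    Measure.infinitePi (fun _ : ℕ => μ) ((fun x => x 0) ⁻¹' A ∩ (fun x j => x (j + 1)) ⁻¹' B) =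
      μ A * Measure.infinitePi (fun _ : ℕ => μ) B := by
  set ν := Measure.infinitePi (fun _ : ℕ => μ)
  set m : ℕ → MeasurableSpace (ℕ → E) := fun i => MeasurableSpace.comap (fun x => x i) ‹_›
  have hindep : iIndep m ν :=
    (iIndepFun_iff_iIndep _ _ _).1 (iIndepFun_infinitePi (X := fun _ x => x) fun _ => measurable_id)
  have hsplit := (Indep_iff _ _ ν).1 <| indep_iSup_of_disjoint
    (fun i => (measurable_pi_apply i).comap_le) hindep (disjoint_compl_right (a := {0}))
  have hhead : MeasurableSet[⨆ i ∈ ({0} : Set ℕ), m i] ((fun x => x 0) ⁻¹' A) :=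
    le_iSup₂ (f := fun i (_ : i ∈ ({0} : Set ℕ)) => m i) 0 rfl _ ⟨A, hA, rfl⟩
  have hshift : Measurable[⨆ i ∈ ({0}ᶜ : Set ℕ), m i] (fun (x : ℕ → E) j => x (j + 1)) :=
    @measurable_pi_lambda _ _ _ (⨆ i ∈ ({0}ᶜ : Set ℕ), m i) _ _ fun j => Measurable.of_comap_le <|
      le_iSup₂ (f := fun i (_ : i ∈ ({0}ᶜ : Set ℕ)) => m i) (j + 1) (Nat.succ_ne_zero j)
  rw [hsplit _ _ hhead (hshift hB), ← Measure.map_apply (measurable_pi_apply 0) hA,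
    Measure.infinitePi_map_eval, ← Measure.map_apply (by fun_prop) hB,
    Measure.map_infinitePi_infinitePi_of_inj Nat.succ_injective]

theorem infinitePi_real_iUnion_preimage_eval_zero_inter_preimage_shift {ι : Type*} [Fintype ι]
    {A : ι → Set E} {B : ι → Set (ℕ → E)} (hA : ∀ i, MeasurableSet (A i))
    (hB : ∀ i, MeasurableSet (B i)) (hdisj : Pairwise (Disjoint on A)) :
    (Measure.infinitePi (fun _ : ℕ => μ)).real
        (⋃ i, (fun x => x 0) ⁻¹' A i ∩ (fun x j => x (j + 1)) ⁻¹' B i) =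
      ∑ i, μ.real (A i) * (Measure.infinitePi (fun _ : ℕ => μ)).real (B i) := by
  rw [measureReal_iUnion_fintype
    (fun i j hij => ((hdisj hij).preimage _).mono inter_subset_left inter_subset_left)
    (fun i => (measurable_pi_apply 0 (hA i)).inter
      (measurable_pi_lambda _ (fun j => measurable_pi_apply (j + 1)) (hB i)))]
  simp only [measureReal_def, infinitePi_preimage_eval_zero_inter_preimage_shift (hA _) (hB _),
    ENNReal.toReal_mul]

theorem measureReal_eq_infinitePi_real {Ω : Type*} [MeasurableSpace Ω] {P : Measure Ω}
    {X : ℕ → Ω → E} (hindep : iIndepFun X P)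
    (hdist : ∀ i, Measure.map (X i) P = μ) {S : Set (ℕ → E)} (hS : MeasurableSet S) :
    P.real ((fun ω j => X j ω) ⁻¹' S) = (Measure.infinitePi fun _ : ℕ => μ).real S := by
  have hX : ∀ i, AEMeasurable (X i) P := fun i =>
    .of_map_ne_zero (by rw [hdist i]; exact IsProbabilityMeasure.ne_zero μ)
  rw [measureReal_def, measureReal_def, ← Measure.map_apply_of_aemeasurable
    (aemeasurable_pi_iff.2 hX) hS, hindep.map_fun_eq_infinitePi_map₀' hX]
  simp_rw [hdist]

end SequenceSpace

section Survival

variable {μ : Measure ℝ}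

theorem measureReal_Ici_eq_survival (hcont : ∀ x, μ {x} = 0) (x : ℝ) :
    μ.real (Ici x) = survival μ x := by
  rw [survival, measure_congr (Ioi_ae_eq_Ici' (hcont x)), measureReal_def]

theorem measureReal_Iio_eq_one_sub_survival [IsProbabilityMeasure μ] (hcont : ∀ x, μ {x} = 0)
    (x : ℝ) :
    μ.real (Iio x) = 1 - survival μ x := by
  rw [← compl_Ici, probReal_compl_eq_one_sub measurableSet_Ici, measureReal_Ici_eq_survival hcont]

theorem measureReal_Ico_eq_survival_sub [IsFiniteMeasure μ] (hcont : ∀ x, μ {x} = 0) {x y : ℝ}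
    (hxy : x ≤ y) :
    μ.real (Ico x y) = survival μ x - survival μ y := by
  rw [← Ici_sdiff_Ici, measureReal_sdiff (Ici_subset_Ici.2 hxy) measurableSet_Ici,
    measureReal_Ici_eq_survival hcont, measureReal_Ici_eq_survival hcont]

end Survival

noncomputable def failureProb (μ : Measure ℝ) (γ β α : ℝ) (b c : ℕ → ℝ) (k l : ℕ) : ℝ :=
  (Measure.infinitePi (fun _ : ℕ => μ)).real {x | FailsWithCounts γ β α b c k l x}

section FirstStep

variable {μ : Measure ℝ} [IsProbabilityMeasure μ] {γ β α : ℝ} {b c : ℕ → ℝ} {k l : ℕ}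

theorem failureProb_eq_first_step (hγβ : γ ≤ β) (hβ : β ≤ α + b 0 - c 0) :
    failureProb μ γ β α b c k l =
      μ.real (Iio γ) * failureProb μ γ β α b c k l +
      μ.real (Ico γ β) *
        (if 1 ≤ k then failureProb μ γ β α (fun j => b (j + 1)) c (k - 1) l else 0) +
      μ.real (Ico β (α + b 0 - c 0)) *
        (if 1 ≤ l then failureProb μ β β α b (fun j => c (j + 1)) k (l - 1) else 0) +
      μ.real (Ici (α + b 0 - c 0)) * (if k = 0 ∧ l = 0 then 1 else 0) := by
  let A : Fin 4 → Set ℝ := ![Iio γ, Ico γ β, Ico β (α + b 0 - c 0), Ici (α + b 0 - c 0)]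
  let B : Fin 4 → Set (ℕ → ℝ) := ![{y | FailsWithCounts γ β α b c k l y},
    {y | 1 ≤ k ∧ FailsWithCounts γ β α (fun j => b (j + 1)) c (k - 1) l y},
    {y | 1 ≤ l ∧ FailsWithCounts β β α b (fun j => c (j + 1)) k (l - 1) y},
    {_y | k = 0 ∧ l = 0}]
  have hset : {x | FailsWithCounts γ β α b c k l x} =
      ⋃ i, (fun x => x 0) ⁻¹' A i ∩ (fun x j => x (j + 1)) ⁻¹' B i := by
    ext x
    rw [Set.mem_ofPred_eq, failsWithCounts_iff_first_step hγβ hβ]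
    simp [A, B, Fin.exists_fin_succ, and_assoc]
  have hA : ∀ i, MeasurableSet (A i) := by
    intro i
    fin_cases i <;> simp [A]
  have hB : ∀ i, MeasurableSet (B i) := by
    intro i
    fin_cases i
    · exact measurableSet_failsWithCounts
    · exact (MeasurableSet.const _).inter measurableSet_failsWithCounts
    · exact (MeasurableSet.const _).inter measurableSet_failsWithCounts
    · exact MeasurableSet.const _
  have hdisj : Pairwise (Disjoint on A) := by
    intro i j hij
    fin_cases i <;> fin_cases j <;> simp [A, Set.disjoint_left] at hij ⊢
    all_goals (intros; linarith)
  calc failureProb μ γ β α b c k l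
      = ∑ i, μ.real (A i) * (Measure.infinitePi (fun _ : ℕ => μ)).real (B i) := by
        rw [failureProb, hset,
          infinitePi_real_iUnion_preimage_eval_zero_inter_preimage_shift hA hB hdisj]
    _ = _ := by
        by_cases hk : 1 ≤ k <;> by_cases hl : 1 ≤ l <;> by_cases hkl : k = 0 ∧ l = 0 <;>
          simp [Fin.sum_univ_four, A, B, failureProb, hk, hl, hkl]

theorem failureProb_eq_div (hcont : ∀ x, μ {x} = 0) (hγβ : γ ≤ β) (hβ : β ≤ α + b 0 - c 0)
    (hγ : survival μ γ ≠ 0) :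
    failureProb μ γ β α b c k l =
      ((survival μ γ - survival μ β) *
          (if 1 ≤ k then failureProb μ γ β α (fun j => b (j + 1)) c (k - 1) l else 0) +
        (survival μ β - survival μ (α + b 0 - c 0)) *
          (if 1 ≤ l then failureProb μ β β α b (fun j => c (j + 1)) k (l - 1) else 0) +
        survival μ (α + b 0 - c 0) * (if k = 0 ∧ l = 0 then 1 else 0)) / survival μ γ := by
  have h := failureProb_eq_first_step (μ := μ) (k := k) (l := l) hγβ hβ
  rw [measureReal_Iio_eq_one_sub_survival hcont, measureReal_Ico_eq_survival_sub hcont hγβ,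
    measureReal_Ico_eq_survival_sub hcont hβ, measureReal_Ici_eq_survival hcont] at h
  rw [eq_div_iff hγ]
  linarith

end FirstStep

theorem eventually_ne_zero_of_tendsto_div {T : Type*} {L : Filter T} {u v : T → ℝ} {g : ℝ}
    (hg : g ≠ 0) (h : Tendsto (fun t => u t / v t) L (𝓝 g)) : ∀ᶠ t in L, u t ≠ 0 ∧ v t ≠ 0 := by
  filter_upwards [h.eventually_ne hg] with t ht
  exact div_ne_zero_iff.1 ht

section Limit

variable {T : Type*} {L : Filter T} {μ : Measure ℝ} [IsProbabilityMeasure μ]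
  {γ β α : T → ℝ} {b c : T → ℕ → ℝ} {g a : ℝ}

theorem tendsto_failureProb_of_first_step (hcont : ∀ x, μ {x} = 0) {k l : ℕ}
    (hγβ : ∀ t, γ t ≤ β t) (hβ : ∀ t, β t ≤ α t + b t 0 - c t 0) (hg : g ≠ 0)
    (hgt : Tendsto (fun t => survival μ (β t) / survival μ (γ t)) L (𝓝 g))
    (hat : Tendsto (fun t => survival μ (α t + b t 0 - c t 0) / survival μ (β t)) L (𝓝 a))
    {Q₁ Q₂ : ℝ}
    (h₁ : Tendsto (fun t => if 1 ≤ k then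
      failureProb μ (γ t) (β t) (α t) (fun j => b t (j + 1)) (c t) (k - 1) l else 0) L (𝓝 Q₁))
    (h₂ : Tendsto (fun t => if 1 ≤ l then
      failureProb μ (β t) (β t) (α t) (b t) (fun j => c t (j + 1)) k (l - 1) else 0) L (𝓝 Q₂)) :
    Tendsto (fun t => failureProb μ (γ t) (β t) (α t) (b t) (c t) k l) L
      (𝓝 ((1 - g) * Q₁ + (1 - a) * g * Q₂ + a * g * (if k = 0 ∧ l = 0 then 1 else 0))) := by
  refine Tendsto.congr' ?_ ((((tendsto_const_nhds.sub hgt).mul h₁).add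
    (((tendsto_const_nhds.sub hat).mul hgt).mul h₂)).add ((hat.mul hgt).mul tendsto_const_nhds))
  filter_upwards [eventually_ne_zero_of_tendsto_div hg hgt] with t ⟨hβ0, hγ0⟩
  rw [failureProb_eq_div hcont (hγβ t) (hβ t) hγ0]
  field_simp

theorem tendsto_failureProb (hcont : ∀ x, μ {x} = 0) (hγβ : ∀ t, γ t ≤ β t)
    (hβα : ∀ t k l, β t ≤ α t + b t k - c t l) (hg : g ≠ 0)
    (hgt : Tendsto (fun t => survival μ (β t) / survival μ (γ t)) L (𝓝 g))
    (hat : ∀ k l, Tendsto (fun t => survival μ (α t + b t k - c t l) / survival μ (β t)) L (𝓝 a))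
    (k l : ℕ) :
    Tendsto (fun t => failureProb μ (γ t) (β t) (α t) (b t) (c t) k l) L
      (𝓝 (g * (1 - g) ^ k * (a * (1 - a) ^ l))) := by
  have hself : Tendsto (fun t => survival μ (β t) / survival μ (β t)) L (𝓝 1) :=
    tendsto_const_nhds.congr' <| (eventually_ne_zero_of_tendsto_div hg hgt).mono
      fun t ht => (div_self ht.1).symm
  induction k generalizing b l γ c g with
  | zero =>
    induction l generalizing γ c g with
    | zero =>
      convert tendsto_failureProb_of_first_step (k := 0) (l := 0) hcont hγβ
        (fun t => hβα t 0 0) hg hgt (hat 0 0) (Q₁ := 0) (Q₂ := 0)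
        (by simpa using tendsto_const_nhds) (by simpa using tendsto_const_nhds) using 2
      simp only [pow_zero, mul_one, mul_zero, add_zero, and_self, ↓reduceIte, zero_add]
      ring
    | succ l ih =>
      convert tendsto_failureProb_of_first_step (k := 0) (l := l + 1) hcont hγβ
        (fun t => hβα t 0 0) hg hgt (hat 0 0) (Q₁ := 0) (by simpa using tendsto_const_nhds)
        (by simpa using (ih (fun t => le_rfl) (fun t k l => hβα t k (l + 1)) one_ne_zero hself
          (fun k l => hat k (l + 1)))) using 2
      simp only [pow_zero, mul_one, mul_zero, zero_add, Nat.add_eq_zero_iff, one_ne_zero, and_false,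
        ↓reduceIte, add_zero]
      ring
  | succ k ihk =>
    induction l generalizing γ c g with
    | zero =>
      convert tendsto_failureProb_of_first_step (k := k + 1) (l := 0) hcont hγβ
        (fun t => hβα t 0 0) hg hgt (hat 0 0) (Q₂ := 0)
        (by simpa using (ihk (l := 0) hγβ (fun t k l => hβα t (k + 1) l) hg hgt
          (fun k l => hat (k + 1) l)))
        (by simpa using tendsto_const_nhds) using 2
      simp only [pow_zero, mul_one, mul_zero, add_zero, Nat.add_eq_zero_iff, one_ne_zero, and_false,
        and_true, ↓reduceIte]
      ring
    | succ l ihl =>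
      convert tendsto_failureProb_of_first_step (k := k + 1) (l := l + 1) hcont hγβ
        (fun t => hβα t 0 0) hg hgt (hat 0 0)
        (by simpa using (ihk (l := l + 1) hγβ (fun t k l => hβα t (k + 1) l) hg hgt
          (fun k l => hat (k + 1) l)))
        (by simpa using (ihl (fun t => le_rfl) (fun t k l => hβα t k (l + 1)) one_ne_zero hself
          (fun k l => hat k (l + 1)))) using 2
      simp only [mul_zero, add_zero, Nat.add_eq_zero_iff, one_ne_zero, and_false, and_self,
        ↓reduceIte]
      ring

end Limit

theorem shock_joint_asymptotic_geometric_general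
    {Ω : Type*} [MeasurableSpace Ω] (P : Measure Ω) [IsProbabilityMeasure P]
    (μ : Measure ℝ) [IsProbabilityMeasure μ]
    (X : ℕ → Ω → ℝ)
    (hindep : iIndepFun X P)
    (hdist : ∀ i, Measure.map (X i) P = μ)
    (hcont : ∀ x : ℝ, μ {x} = 0)
    (γ β α : ℝ → ℝ) (b c : ℝ → ℕ → ℝ)
    (hγβ : ∀ t, γ t < β t)
    (hβα : ∀ t, ∀ k l : ℕ, β t ≤ α t + b t k - c t l)
    (g : ℝ) (hg : g ∈ Set.Ioo (0 : ℝ) 1)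
    (hgt : Tendsto (fun t => survival μ (β t) / survival μ (γ t)) atTop (nhds g))
    (a : ℝ)
    (hat : ∀ k l : ℕ, Tendsto
      (fun t => survival μ (α t + b t k - c t l) / survival μ (β t)) atTop (nhds a))
    (k l : ℕ) :
    Tendsto (fun t =>
        (P {ω | (∃ i, fatalShock (γ t) (β t) (α t) (b t) (c t) (fun j => X j ω) i) ∧
          (shockCounts (γ t) (β t) (α t) (b t) (c t) (fun j => X j ω)
            (nuShock (γ t) (β t) (α t) (b t) (c t) (fun j => X j ω))) = (k, l)}).toReal)
      atTop
      (nhds (g * (1 - g) ^ k * (a * (1 - a) ^ l))) := by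
  refine (tendsto_failureProb hcont (fun t => (hγβ t).le) hβα hg.1.ne' hgt hat k l).congr
    fun t => (measureReal_eq_infinitePi_real hindep hdist measurableSet_failsWithCounts).symm

/-- in the special case `a_{k,l} = a ∈ (0,1)` for all `k,l`, the limiting
joint distribution is the product of two geometric distributions,
`P{N₊(ν)=k, N₋(ν)=l} → g(1-g)^k ⬝ a(1-a)^l`, so that `N₊(ν)` and `N₋(ν)` are
asymptotically independent. -/
theorem shock_joint_asymptotic_geometric
    {Ω : Type*} [MeasurableSpace Ω] (P : Measure Ω) [IsProbabilityMeasure P]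
    (μ : Measure ℝ) [IsProbabilityMeasure μ]
    (X : ℕ → Ω → ℝ)
    (hindep : iIndepFun X P)
    (hdist : ∀ i, Measure.map (X i) P = μ)
    (hcont : ∀ x : ℝ, μ {x} = 0)
    (γ β α : ℝ → ℝ) (b c : ℝ → ℕ → ℝ)
    (hγβ : ∀ t, γ t < β t)
    (hb : ∀ t, Monotone (b t)) (hc : ∀ t, Monotone (c t))
    (hb0 : ∀ t, b t 0 = 0) (hc0 : ∀ t, c t 0 = 0)
    (hβα : ∀ t, ∀ k l : ℕ, β t ≤ α t + b t k - c t l)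
    (hγpos : ∀ t, 0 < survival μ (γ t))
    (hβ0 : Tendsto (fun t => survival μ (β t)) atTop (nhds 0))
    (g : ℝ) (hg : g ∈ Set.Ioo (0 : ℝ) 1)
    (hgt : Tendsto (fun t => survival μ (β t) / survival μ (γ t)) atTop (nhds g))
    (a : ℝ) (ha : a ∈ Set.Ioo (0 : ℝ) 1)
    (hat : ∀ k l : ℕ, Tendsto
      (fun t => survival μ (α t + b t k - c t l) / survival μ (β t)) atTop (nhds a))
    (k l : ℕ) :
    Tendsto (fun t =>
        (P {ω | (∃ i, fatalShock (γ t) (β t) (α t) (b t) (c t) (fun j => X j ω) i) ∧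
          (shockCounts (γ t) (β t) (α t) (b t) (c t) (fun j => X j ω)
            (nuShock (γ t) (β t) (α t) (b t) (c t) (fun j => X j ω))) = (k, l)}).toReal)
      atTop
      (nhds (g * (1 - g) ^ k * (a * (1 - a) ^ l))) :=
  shock_joint_asymptotic_geometric_general P μ X hindep hdist hcont γ β α b c hγβ hβα g hg hgt a hat
    k l
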